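/- arXiv:2201.10828 — 5 statements merged into one kernel-verified Lean document; each statement's English description precedes it below -/
import Mathlib

section
/- Let I and J be finite sets, (n_i)_{i∈I} and (m_j)_{j∈J} families of positive integers, and (a_i)_{i∈I}, (b_j)_{j∈J} families of positive real numbers. If (∏_{i∈I}(x^{n_i} - a_i))(∏_{j∈J}(x^{m_j} + b_j)) = (∏_{i∈I}(x^{n_i} + a_i))(∏_{j∈J}(x^{m_j} - b_j)) as polynomials over ℝ, then there exists a bijection σ: I → J with n_i = m_{σ(i)} and a_i = b_{σ(i)} for all i ∈ I. -/
/-!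
Encode each family as a multiset of pairs `(n, a)` and cancel the common part, so that the two
multisets become disjoint. If anything is left, fix a ray `a = r ^ n` met by some remaining pair
and let `N` be the largest exponent on it. The point `z = r * exp (π i / N)` is a root of no
`X ^ n - a`, and a root of `X ^ n + a` only for the pair `(N, r ^ N)`: for `n < N` the power
`z ^ n` lies strictly above the real axis. Comparing the multiplicity of `z` on both sides shows
that `(N, r ^ N)` occurs equally often in the two multisets, contradicting disjointness.
-/

open Polynomial Real

section RootCount

variable {K : Type*} [Field K] [CharZero K] [DecidableEq K]

lemma count_roots_X_pow_sub_C {n : ℕ} (hn : n ≠ 0) {c : K} (hc : c ≠ 0) (z : K) :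
    (X ^ n - C c).roots.count z = if z ^ n = c then 1 else 0 := by
  have hnodup := nodup_roots (separable_X_pow_sub_C c (Nat.cast_ne_zero.2 hn) hc)
  have hmem : z ∈ (X ^ n - C c).roots ↔ z ^ n = c := mem_nthRoots (Nat.pos_of_ne_zero hn)
  split_ifs with h
  · exact Multiset.count_eq_one_of_mem hnodup (hmem.2 h)
  · exact Multiset.count_eq_zero_of_notMem (mt hmem.1 h)

lemma count_roots_multiset_prod_X_pow_sub_C {α : Type*} (s : Multiset α) (e : α → ℕ) (c : α → K)
    (hs : ∀ p ∈ s, e p ≠ 0 ∧ c p ≠ 0) (z : K) :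
    (s.map fun p => X ^ e p - C (c p)).prod.roots.count z = s.countP fun p => z ^ e p = c p := by
  induction s using Multiset.induction with
  | empty => simp
  | cons q s ih =>
    have hq := hs q (Multiset.mem_cons_self q s)
    have hmonic : (s.map fun p => X ^ e p - C (c p)).prod.Monic :=
      monic_multiset_prod_of_monic _ _ fun p hp =>
        monic_X_pow_sub_C _ (hs p (Multiset.mem_cons_of_mem hp)).1
    rw [Multiset.map_cons, Multiset.prod_cons,
      roots_mul ((monic_X_pow_sub_C _ hq.1).mul hmonic).ne_zero, Multiset.count_add,
      count_roots_X_pow_sub_C hq.1 hq.2, ih fun p hp => hs p (Multiset.mem_cons_of_mem hp),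
      Multiset.countP_cons]
    split_ifs <;> omega

end RootCount

noncomputable def prodXPowSubC (P : Multiset (ℕ × ℝ)) : ℝ[X] :=
  (P.map fun p => X ^ p.1 - C p.2).prod

noncomputable def prodXPowAddC (P : Multiset (ℕ × ℝ)) : ℝ[X] :=
  (P.map fun p => X ^ p.1 + C p.2).prod

lemma prodXPowSubC_add (P Q : Multiset (ℕ × ℝ)) :
    prodXPowSubC (P + Q) = prodXPowSubC P * prodXPowSubC Q := by
  simp only [prodXPowSubC, Multiset.map_add, Multiset.prod_add]

lemma prodXPowAddC_add (P Q : Multiset (ℕ × ℝ)) :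
    prodXPowAddC (P + Q) = prodXPowAddC P * prodXPowAddC Q := by
  simp only [prodXPowAddC, Multiset.map_add, Multiset.prod_add]

lemma monic_prodXPowSubC {P : Multiset (ℕ × ℝ)} (hP : ∀ p ∈ P, 0 < p.1) :
    (prodXPowSubC P).Monic :=
  monic_multiset_prod_of_monic _ _ fun p hp => monic_X_pow_sub_C _ (hP p hp).ne'

lemma monic_prodXPowAddC {P : Multiset (ℕ × ℝ)} (hP : ∀ p ∈ P, 0 < p.1) :
    (prodXPowAddC P).Monic :=
  monic_multiset_prod_of_monic _ _ fun p hp => monic_X_pow_add_C _ (hP p hp).ne'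

lemma count_roots_map_prodXPowSubC {P : Multiset (ℕ × ℝ)} (hP : ∀ p ∈ P, 0 < p.1 ∧ 0 < p.2)
    (z : ℂ) :
    ((prodXPowSubC P).map (algebraMap ℝ ℂ)).roots.count z =
      P.countP fun p => z ^ p.1 = (p.2 : ℂ) := by
  rw [prodXPowSubC, Polynomial.map_multiset_prod, Multiset.map_map,
    ← count_roots_multiset_prod_X_pow_sub_C P Prod.fst (fun p => (p.2 : ℂ))
      (fun p hp => ⟨(hP p hp).1.ne', Complex.ofReal_ne_zero.2 (hP p hp).2.ne'⟩)]
  simp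

lemma count_roots_map_prodXPowAddC {P : Multiset (ℕ × ℝ)} (hP : ∀ p ∈ P, 0 < p.1 ∧ 0 < p.2)
    (z : ℂ) :
    ((prodXPowAddC P).map (algebraMap ℝ ℂ)).roots.count z =
      P.countP fun p => z ^ p.1 = ((-p.2 : ℝ) : ℂ) := by
  rw [prodXPowAddC, Polynomial.map_multiset_prod, Multiset.map_map,
    ← count_roots_multiset_prod_X_pow_sub_C P Prod.fst (fun p => ((-p.2 : ℝ) : ℂ))
      (fun p hp => ⟨(hP p hp).1.ne', Complex.ofReal_ne_zero.2 (neg_ne_zero.2 (hP p hp).2.ne')⟩)]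
  simp [sub_eq_add_neg]

lemma ofReal_mul_exp_pi_div_mul_I_pow_eq_ofReal_iff {r : ℝ} (hr : 0 < r) {n N : ℕ} (hn : 0 < n)
    {a : ℝ} (hmax : |a| = r ^ n → n ≤ N) :
    ((r : ℂ) * Complex.exp (↑(π / N) * Complex.I)) ^ n = a ↔ n = N ∧ a = -r ^ N := by
  have hpow : ((r : ℂ) * Complex.exp (↑(π / N) * Complex.I)) ^ n =
      ↑(r ^ n) * Complex.exp (↑(n * (π / N)) * Complex.I) := by
    rw [mul_pow, ← Complex.exp_nat_mul]
    push_cast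
    ring_nf
  rw [hpow]
  by_cases ha : |a| = r ^ n
  · rcases (hmax ha).lt_or_eq with hlt | rfl
    · have hangle : 0 < n * (π / N) ∧ n * (π / N) < π := by
        have hN : (0 : ℝ) < N := by exact_mod_cast hn.trans hlt
        refine ⟨by positivity, ?_⟩
        rw [mul_div_assoc', div_lt_iff₀ hN, mul_comm]
        exact mul_lt_mul_of_pos_left (by exact_mod_cast hlt) pi_pos
      have him : 0 < (↑(r ^ n) * Complex.exp (↑(n * (π / N)) * Complex.I)).im := by
        rw [Complex.im_ofReal_mul, Complex.exp_ofReal_mul_I_im]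
        exact mul_pos (pow_pos hr n) (sin_pos_of_pos_of_lt_pi hangle.1 hangle.2)
      refine ⟨fun h => by rw [h] at him; simp at him, fun h => absurd h.1 hlt.ne⟩
    · have hangle : (n : ℝ) * (π / n) = π := by field_simp
      rw [hangle, Complex.exp_pi_mul_I, mul_neg_one, ← Complex.ofReal_neg, Complex.ofReal_inj]
      exact ⟨fun h => ⟨rfl, h.symm⟩, fun h => h.2.symm⟩
  · refine ⟨fun h => absurd ?_ ha, fun h => absurd ?_ ha⟩
    swap
    · rw [h.2, h.1, abs_neg, abs_of_pos (pow_pos hr N)]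
    have := congrArg norm h
    rwa [norm_mul, Complex.norm_exp_ofReal_mul_I, mul_one, Complex.norm_real, Complex.norm_real,
      norm_of_nonneg (pow_pos hr n).le, Real.norm_eq_abs, eq_comm] at this

lemma count_eq_count_of_prodXPow_eq {P Q : Multiset (ℕ × ℝ)} (hP : ∀ p ∈ P, 0 < p.1 ∧ 0 < p.2)
    (hQ : ∀ p ∈ Q, 0 < p.1 ∧ 0 < p.2)
    (h : prodXPowSubC P * prodXPowAddC Q = prodXPowAddC P * prodXPowSubC Q)
    {r : ℝ} (hr : 0 < r) {N : ℕ} (hmax : ∀ p ∈ P + Q, p.2 = r ^ p.1 → p.1 ≤ N) :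
    P.count (N, r ^ N) = Q.count (N, r ^ N) := by
  set z : ℂ := r * Complex.exp (↑(π / N) * Complex.I)
  have hpos : ∀ p ∈ P + Q, 0 < p.1 ∧ 0 < p.2 := fun p hp =>
    (Multiset.mem_add.1 hp).elim (hP p) (hQ p)
  have hsub : ∀ p ∈ P + Q, ¬ z ^ p.1 = (p.2 : ℂ) := fun p hp => by
    rw [ofReal_mul_exp_pi_div_mul_I_pow_eq_ofReal_iff hr (hpos p hp).1
      fun h => hmax p hp (by rw [← h, abs_of_pos (hpos p hp).2])]
    exact fun h => by linarith [h.2, (hpos p hp).2, pow_pos hr N]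
  have hadd : ∀ p ∈ P + Q, z ^ p.1 = ((-p.2 : ℝ) : ℂ) ↔ (N, r ^ N) = p := fun p hp => by
    rw [ofReal_mul_exp_pi_div_mul_I_pow_eq_ofReal_iff hr (hpos p hp).1
      fun h => hmax p hp (by rw [← h, abs_neg, abs_of_pos (hpos p hp).2]), neg_inj, Prod.ext_iff]
    exact ⟨fun h => ⟨h.1.symm, h.2.symm⟩, fun h => ⟨h.1.symm, h.2.symm⟩⟩
  have hC := congrArg (fun f => (f.map (algebraMap ℝ ℂ)).roots.count z) h
  simp only [Polynomial.map_mul] at hC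
  rw [roots_mul (((monic_prodXPowSubC fun p hp => (hP p hp).1).map _).mul
        ((monic_prodXPowAddC fun p hp => (hQ p hp).1).map _)).ne_zero,
    roots_mul (((monic_prodXPowAddC fun p hp => (hP p hp).1).map _).mul
        ((monic_prodXPowSubC fun p hp => (hQ p hp).1).map _)).ne_zero,
    Multiset.count_add, Multiset.count_add, count_roots_map_prodXPowSubC hP,
    count_roots_map_prodXPowSubC hQ, count_roots_map_prodXPowAddC hP,
    count_roots_map_prodXPowAddC hQ,
    Multiset.countP_eq_zero.2 fun p hp => hsub p (Multiset.mem_add.2 (.inl hp)),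
    Multiset.countP_eq_zero.2 fun p hp => hsub p (Multiset.mem_add.2 (.inr hp)),
    Multiset.countP_congr rfl fun p hp => propext (hadd p (Multiset.mem_add.2 (.inl hp))),
    Multiset.countP_congr rfl fun p hp => propext (hadd p (Multiset.mem_add.2 (.inr hp)))] at hC
  rw [zero_add, add_zero] at hC
  exact hC.symm

lemma prodXPow_eq_of_prodXPow_add_eq {P Q R : Multiset (ℕ × ℝ)} (hR : ∀ p ∈ R, 0 < p.1)
    (h : prodXPowSubC (P + R) * prodXPowAddC (Q + R) =
      prodXPowAddC (P + R) * prodXPowSubC (Q + R)) :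
    prodXPowSubC P * prodXPowAddC Q = prodXPowAddC P * prodXPowSubC Q := by
  refine mul_right_cancel₀ ((monic_prodXPowSubC hR).mul (monic_prodXPowAddC hR)).ne_zero ?_
  rw [prodXPowSubC_add, prodXPowSubC_add, prodXPowAddC_add, prodXPowAddC_add] at h
  linear_combination h

lemma eq_of_prodXPow_eq {P Q : Multiset (ℕ × ℝ)} (hP : ∀ p ∈ P, 0 < p.1 ∧ 0 < p.2)
    (hQ : ∀ p ∈ Q, 0 < p.1 ∧ 0 < p.2)
    (h : prodXPowSubC P * prodXPowAddC Q = prodXPowAddC P * prodXPowSubC Q) : P = Q := by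
  have hP' : ∀ p ∈ P - Q, 0 < p.1 ∧ 0 < p.2 := fun p hp =>
    hP p (Multiset.mem_of_le (Multiset.sub_le_self P Q) hp)
  have hQ' : ∀ p ∈ Q - P, 0 < p.1 ∧ 0 < p.2 := fun p hp =>
    hQ p (Multiset.mem_of_le (Multiset.sub_le_self Q P) hp)
  have h' : prodXPowSubC (P - Q) * prodXPowAddC (Q - P) =
      prodXPowAddC (P - Q) * prodXPowSubC (Q - P) := by
    refine prodXPow_eq_of_prodXPow_add_eq (R := P ∩ Q)
      (fun p hp => (hP p (Multiset.mem_of_le Multiset.inter_le_left hp)).1) ?_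
    rwa [Multiset.sub_add_inter, Multiset.inter_comm, Multiset.sub_add_inter]
  suffices hzero : P - Q + (Q - P) = 0 by
    rw [add_eq_zero, tsub_eq_zero_iff_le, tsub_eq_zero_iff_le] at hzero
    exact le_antisymm hzero.1 hzero.2
  by_contra hne
  obtain ⟨q, hq⟩ := Multiset.exists_mem_of_ne_zero hne
  have hqpos := (Multiset.mem_add.1 hq).elim (hP' q) (hQ' q)
  set r := q.2 ^ (q.1 : ℝ)⁻¹
  have hr : 0 < r := rpow_pos_of_pos hqpos.2 _
  obtain ⟨p, hp, hpmax⟩ := Finset.exists_max_image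
    ((P - Q + (Q - P)).filter fun p => p.2 = r ^ p.1).toFinset Prod.fst
    ⟨q, Multiset.mem_toFinset.2 (Multiset.mem_filter.2
      ⟨hq, (rpow_inv_natCast_pow hqpos.2.le hqpos.1.ne').symm⟩)⟩
  simp only [Multiset.mem_toFinset, Multiset.mem_filter] at hp hpmax
  have hcount := count_eq_count_of_prodXPow_eq hP' hQ' h' hr (N := p.1)
    fun p' hp' hp'r => hpmax p' ⟨hp', hp'r⟩
  have hpmem := Multiset.count_pos.2 hp.1
  rw [show (p.1, r ^ p.1) = p from Prod.ext rfl hp.2.symm, Multiset.count_sub,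
    Multiset.count_sub] at hcount
  rw [Multiset.count_add, Multiset.count_sub, Multiset.count_sub] at hpmem
  omega

lemma Fintype.exists_equiv_of_map_univ_eq {I J γ : Type*} [Fintype I] [Fintype J]
    {F : I → γ} {G : J → γ} (h : Finset.univ.val.map F = Finset.univ.val.map G) :
    ∃ σ : I ≃ J, ∀ i, F i = G (σ i) := by
  classical
  have hfiber (c : γ) : Fintype.card {i // F i = c} = Fintype.card {j // G j = c} := by
    simpa [Fintype.card_subtype, Finset.card, Multiset.count_map, eq_comm] using
      congrArg (Multiset.count c) h
  let σ := Equiv.ofFiberEquiv fun c => Fintype.equivOfCardEq (hfiber c)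
  exact ⟨σ, fun i => (Equiv.ofFiberEquiv_map _ i).symm⟩

theorem stmt1 {I J : Type*} [Fintype I] [Fintype J]
    (n : I → ℕ) (m : J → ℕ) (a : I → ℝ) (b : J → ℝ)
    (hn : ∀ i, 0 < n i) (hm : ∀ j, 0 < m j)
    (ha : ∀ i, 0 < a i) (hb : ∀ j, 0 < b j)
    (h : ((∏ i, (X ^ n i - C (a i))) * (∏ j, (X ^ m j + C (b j))) : ℝ[X])
       = (∏ i, (X ^ n i + C (a i))) * (∏ j, (X ^ m j - C (b j)))) :
    ∃ σ : I ≃ J, ∀ i, n i = m (σ i) ∧ a i = b (σ i) := by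
  have hPQ : Finset.univ.val.map (fun i => (n i, a i)) =
      Finset.univ.val.map (fun j => (m j, b j)) := by
    refine eq_of_prodXPow_eq (by simpa using fun i => ⟨hn i, ha i⟩)
      (by simpa using fun j => ⟨hm j, hb j⟩) ?_
    simpa only [prodXPowSubC, prodXPowAddC, Multiset.map_map, Function.comp_def,
      Finset.prod_map_val] using h
  obtain ⟨σ, hσ⟩ := Fintype.exists_equiv_of_map_univ_eq hPQ
  exact ⟨σ, fun i => Prod.ext_iff.1 (hσ i)⟩
end

section
/- Let Y be a finite set, (n_i)_{i∈Y} a family of positive integers, (a_i)_{i∈Y} a family of positive real numbers, and let C, D ⊆ Y satisfy (∏_{i∈D}(x^{n_i}-1))(∏_{i∈Y∖D}(x^{n_i}+a_i)) = (∏_{i∈C}(x^{n_i}-1))(∏_{i∈Y∖C}(x^{n_i}+a_i)) as real polynomials. Then there exists a bijection σ: C → D with n_i = n_{σ(i)} and a_i = a_{σ(i)} for all i ∈ C. -/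
/-!
Multiplying by `∏_C (X^{n_i} + a_i) · ∏_D (X^{n_i} + a_i)` and cancelling `∏_Y (X^{n_i} + a_i)`,
the identity becomes
`∏_D (X^{n_i} - 1) · ∏_C (X^{n_i} + a_i) = ∏_C (X^{n_i} - 1) · ∏_D (X^{n_i} + a_i)`,
a relation between the multisets of pairs `(n_i, a_i)` over `C` and over `D`. Take a pair
`(M, α)` on either side with `M` maximal and evaluate at the root `z = α^{1/M} e^{iπ/M}` of
`X^M + α`. For `0 < k < M` the power `z^k` lies strictly in the upper half plane, so `z` is not a
root of any `X^k - 1` and is a root of `X^k + β` with `k ≤ M`, `β > 0` only if `(k, β) = (M, α)`.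
Hence `(M, α)` occurs on both sides; cancelling it and inducting shows the two multisets are
equal.
-/

open Polynomial Complex

theorem Finset.exists_equiv_of_map_val_eq {α β : Type*} {f : α → β}
    {s t : Finset α} (h : s.val.map f = t.val.map f) :
    ∃ σ : s ≃ t, ∀ i, f (σ i) = f i := by
  classical
  have card_fiber (u : Finset α) (c : β) :
      Fintype.card {x : u // f x = c} = (u.val.map f).count c := by
    rw [Fintype.card_subtype, Finset.univ_eq_attach, Finset.filter_attach (fun x => f x = c),
      Finset.card_map, Finset.card_attach, Multiset.count_map]
    simp only [eq_comm, Finset.card_def, Finset.filter_val]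
  let e c : {x : s // f x = c} ≃ {x : t // f x = c} :=
    Fintype.equivOfCardEq (by rw [card_fiber, card_fiber, h])
  exact ⟨Equiv.ofFiberEquiv e, Equiv.ofFiberEquiv_map e⟩

theorem Finset.prod_mul_prod_eq_of_prod_mul_prod_compl_eq {ι M : Type*} [Fintype ι]
    [DecidableEq ι] [CommMonoidWithZero M] [IsCancelMulZero M] [Nontrivial M]
    {f g : ι → M} (hg : ∀ i, g i ≠ 0) {s t : Finset ι}
    (h : (∏ i ∈ s, f i) * ∏ i ∈ sᶜ, g i = (∏ i ∈ t, f i) * ∏ i ∈ tᶜ, g i) :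
    (∏ i ∈ s, f i) * ∏ i ∈ t, g i = (∏ i ∈ t, f i) * ∏ i ∈ s, g i := by
  have hprod : ∏ i, g i ≠ 0 := Finset.prod_ne_zero_iff.2 fun i _ => hg i
  apply mul_right_cancel₀ hprod
  calc (∏ i ∈ s, f i) * (∏ i ∈ t, g i) * ∏ i, g i
      = (∏ i ∈ s, f i) * (∏ i ∈ sᶜ, g i) * ((∏ i ∈ t, g i) * ∏ i ∈ s, g i) := by
        rw [← Finset.prod_mul_prod_compl s g]; ac_rfl
    _ = (∏ i ∈ t, f i) * (∏ i ∈ tᶜ, g i) * ((∏ i ∈ t, g i) * ∏ i ∈ s, g i) := by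
        rw [h]
    _ = (∏ i ∈ t, f i) * (∏ i ∈ s, g i) * ∏ i, g i := by
        rw [← Finset.prod_mul_prod_compl t g]; ac_rfl

/-- The `M`-th root of `-α` of argument `π / M` (for `α > 0`). -/
noncomputable def negRoot (α : ℝ) (M : ℕ) : ℂ := exp ((Real.log α + Real.pi * I) / M)

theorem negRoot_pow_self {α : ℝ} (hα : 0 < α) {M : ℕ} (hM : M ≠ 0) :
    negRoot α M ^ M = -α := by
  rw [negRoot, ← exp_nat_mul, mul_div_cancel₀ _ (Nat.cast_ne_zero.2 hM), exp_add,
    exp_pi_mul_I, ← ofReal_exp, Real.exp_log hα]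
  ring

theorem im_negRoot_pow_pos (α : ℝ) {k M : ℕ} (hk : 0 < k) (hkM : k < M) :
    0 < (negRoot α M ^ k).im := by
  rw [negRoot, ← exp_nat_mul, exp_im]
  have hM : (0 : ℝ) < M := by exact_mod_cast hk.trans hkM
  have hkM' : (k : ℝ) < M := by exact_mod_cast hkM
  have him : ((k : ℂ) * ((Real.log α + Real.pi * I) / M)).im = k * (Real.pi / M) := by simp
  rw [him]
  refine mul_pos (Real.exp_pos _) (Real.sin_pos_of_pos_of_lt_pi (by positivity) ?_)
  rw [mul_div_assoc', div_lt_iff₀ hM]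
  nlinarith [Real.pi_pos]

theorem eq_of_negRoot_pow_eq_ofReal {α x : ℝ} {k M : ℕ} (hk : 0 < k) (hkM : k ≤ M)
    (h : negRoot α M ^ k = x) : k = M := by
  refine hkM.eq_or_lt.resolve_right fun hlt => ?_
  have := im_negRoot_pow_pos α hk hlt
  rw [h, ofReal_im] at this
  exact this.false

theorem mem_of_prod_mul_prod_eq {s t : Multiset (ℕ × ℝ)}
    (hpos : ∀ p ∈ s + t, 0 < p.1 ∧ 0 < p.2)
    (h : (t.map fun p => X ^ p.1 - 1).prod * (s.map fun p => X ^ p.1 + C p.2).prod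
      = (s.map fun p => X ^ p.1 - 1).prod * (t.map fun p => (X ^ p.1 + C p.2 : ℝ[X])).prod)
    {q : ℕ × ℝ} (hq : q ∈ s) (hmax : ∀ p ∈ s + t, p.1 ≤ q.1) : q ∈ t := by
  set z := negRoot q.2 q.1
  have hq_pos := hpos q (Multiset.mem_add.2 (Or.inl hq))
  have hzq : z ^ q.1 = -q.2 := negRoot_pow_self hq_pos.2 hq_pos.1.ne'
  have hz := congrArg (aeval z) h
  simp only [map_mul, map_multiset_prod, Multiset.map_map, Function.comp_def, map_sub, map_add,
    map_pow, aeval_X, aeval_C, map_one, Complex.coe_algebraMap] at hz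
  have hzero :
      (s.map fun p => z ^ p.1 - 1).prod * (t.map fun p => z ^ p.1 + (p.2 : ℂ)).prod = 0 := by
    rw [← hz]
    refine mul_eq_zero_of_right _ (Multiset.prod_eq_zero (Multiset.mem_map.2 ⟨q, hq, ?_⟩))
    rw [hzq]; ring
  obtain ⟨p, hp, hpz⟩ | ⟨p, hp, hpz⟩ := by
    simpa only [mul_eq_zero, Multiset.prod_eq_zero_iff, Multiset.mem_map] using hzero
  · have hp_mem : p ∈ s + t := Multiset.mem_add.2 (Or.inl hp)
    have hp1 : z ^ p.1 = (1 : ℝ) := by rw [ofReal_one]; linear_combination hpz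
    have hpq := eq_of_negRoot_pow_eq_ofReal (hpos p hp_mem).1 (hmax p hp_mem) hp1
    rw [hpq, hzq, ← ofReal_neg, ofReal_inj] at hp1
    linarith
  · have hp_mem : p ∈ s + t := Multiset.mem_add.2 (Or.inr hp)
    have hp1 : z ^ p.1 = (-p.2 : ℝ) := by rw [ofReal_neg]; linear_combination hpz
    have hpq := eq_of_negRoot_pow_eq_ofReal (hpos p hp_mem).1 (hmax p hp_mem) hp1
    rw [hpq, hzq, ← ofReal_neg, ofReal_inj, neg_inj] at hp1
    rwa [Prod.ext hpq.symm hp1]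

theorem eq_of_prod_mul_prod_eq {s t : Multiset (ℕ × ℝ)}
    (hpos : ∀ p ∈ s + t, 0 < p.1 ∧ 0 < p.2)
    (h : (t.map fun p => X ^ p.1 - 1).prod * (s.map fun p => X ^ p.1 + C p.2).prod
      = (s.map fun p => X ^ p.1 - 1).prod * (t.map fun p => (X ^ p.1 + C p.2 : ℝ[X])).prod) :
    s = t := by
  classical
  induction s using Multiset.strongInductionOn generalizing t with
  | ih s ih =>
  rcases eq_or_ne (s + t) 0 with hst | hst
  · obtain ⟨rfl, rfl⟩ := add_eq_zero.1 hst
    rfl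
  obtain ⟨q, hq, hmax⟩ := (s + t).toFinset.exists_max_image Prod.fst
    (Multiset.toFinset_nonempty.2 hst)
  simp only [Multiset.mem_toFinset] at hq hmax
  have hqs_iff : q ∈ s ↔ q ∈ t :=
    ⟨fun hqs => mem_of_prod_mul_prod_eq hpos h hqs hmax,
      fun hqt => mem_of_prod_mul_prod_eq (by rwa [add_comm]) h.symm hqt (by rwa [add_comm])⟩
  have hqs : q ∈ s := by
    rcases Multiset.mem_add.1 hq with hq | hq
    exacts [hq, hqs_iff.2 hq]
  have hqt : q ∈ t := hqs_iff.1 hqs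
  have hq_pos := hpos q hq
  have hpos' : ∀ p ∈ s.erase q + t.erase q, 0 < p.1 ∧ 0 < p.2 := fun p hp =>
    hpos p (Multiset.subset_of_le (add_le_add (s.erase_le q) (t.erase_le q)) hp)
  rw [← Multiset.cons_erase hqs, ← Multiset.cons_erase hqt] at h ⊢
  simp only [Multiset.map_cons, Multiset.prod_cons] at h
  have hfactor : (X ^ q.1 - 1) * (X ^ q.1 + C q.2) ≠ (0 : ℝ[X]) :=
    mul_ne_zero (by simpa using X_pow_sub_C_ne_zero hq_pos.1 (1 : ℝ))
      (X_pow_add_C_ne_zero hq_pos.1 _)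
  rw [ih _ (Multiset.erase_lt.2 hqs) hpos' (mul_left_cancel₀ hfactor (by linear_combination h))]

theorem stmt2 {Y : Type*} [Fintype Y] [DecidableEq Y]
    (n : Y → ℕ) (a : Y → ℝ) (hn : ∀ i, 0 < n i) (ha : ∀ i, 0 < a i)
    (C D : Finset Y)
    (h : ((∏ i ∈ D, (Polynomial.X ^ n i - 1)) *
          (∏ i ∈ Dᶜ, (Polynomial.X ^ n i + Polynomial.C (a i))) : Polynomial ℝ)
       = (∏ i ∈ C, (Polynomial.X ^ n i - 1)) *
          (∏ i ∈ Cᶜ, (Polynomial.X ^ n i + Polynomial.C (a i)))) :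
    ∃ σ : {i // i ∈ C} ≃ {i // i ∈ D},
      ∀ i : {i // i ∈ C}, n i.1 = n (σ i).1 ∧ a i.1 = a (σ i).1 := by
  let f : Y → ℕ × ℝ := fun i => (n i, a i)
  have hprod := Finset.prod_mul_prod_eq_of_prod_mul_prod_compl_eq
    (fun i => X_pow_add_C_ne_zero (hn i) (a i)) h
  have hval : C.val.map f = D.val.map f := by
    refine eq_of_prod_mul_prod_eq (fun p hp => ?_) ?_
    · obtain ⟨i, -, rfl⟩ := Multiset.mem_map.1 (Multiset.map_add f C.val D.val ▸ hp)
      exact ⟨hn i, ha i⟩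
    · simpa only [Finset.prod_eq_multiset_prod, Multiset.map_map, Function.comp_def] using hprod
  obtain ⟨σ, hσ⟩ := Finset.exists_equiv_of_map_val_eq hval
  exact ⟨σ, fun i => Prod.ext_iff.1 (hσ i).symm⟩
end

section
/- Let G and H be finite abelian groups with a non-degenerate pairing f: G × H → ℂ*. Let S be a collection of non-identity subgroups of G all of the same cardinality, and let Δ be a partition of G with {1_G} ∈ Δ such that every block A ∈ Δ other than {1_G} contains C − {1_G} for some C ∈ S. Let Γ be a partition of H such that Δ is finer than l(Γ), and let Λ be a partition of G with {1_G} ∈ Λ such that Δ is finer than Λ. If for all C, M ∈ S, C having the same Λ-distribution as M implies C^‡ has the same Γ-distribution as M^‡, then Λ is finer than l(Γ). -/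
open scoped Classical

/-!
Fix a block `W` of `Λ` other than `{1}` and `a, c ∈ W`. The `Δ`-blocks of `a` and `c` lie in
`W` and contain `C − {1}` and `M − {1}` for some `C, M ∈ S`. As `|C| = |M|`, both subgroups meet
`W` in `|C| − 1` elements, `{1}` in one element and every other block of `Λ` in none, so they
have the same `Λ`-distribution, and by hypothesis `C^‡` and `M^‡` have the same
`Γ`-distribution. For `B ∈ Γ` write `σ_B(x) = ∑_{b ∈ B} f(x, b)`. Orthogonality of characters
on `C` gives `|C| |C^‡ ∩ B| = ∑_{x ∈ C} σ_B(x)`, and since `σ_B` is constant on the `Δ`-block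
of `a`, this is `σ_B(1) + (|C| − 1) σ_B(a)`. Comparing with the same identity for `M` and `c`
and cancelling `|C| − 1 ≠ 0` gives `σ_B(a) = σ_B(c)`.
-/

open Finset

theorem Fintype.sum_eq_ite_of_map_mul {K R : Type*} [Group K] [Fintype K] [CommRing R]
    [IsDomain R] (χ : K → R) (hχ : ∀ x y, χ (x * y) = χ x * χ y) :
    ∑ x, χ x = if ∀ x, χ x = 1 then (Fintype.card K : R) else 0 := by
  split_ifs with h
  · simp [h]
  · obtain ⟨x₀, hx₀⟩ := not_forall.mp h
    have hfix : χ x₀ * ∑ x, χ x = ∑ x, χ x := by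
      rw [mul_sum]
      simp_rw [← hχ]
      exact Fintype.sum_equiv (Equiv.mulLeft x₀) _ _ fun _ => rfl
    by_contra hne
    exact hx₀ ((mul_eq_right₀ hne).mp hfix)

theorem Subgroup.sum_eq_add_of_forall_ne_one {G R : Type*} [Group G] [CommRing R]
    (C : Subgroup G) [Fintype C] (g : G → R) (s : R) (hg : ∀ x ∈ C, x ≠ 1 → g x = s) :
    ∑ x : C, g x = g 1 + (Nat.card C - 1) * s := by
  have hsingle : ∑ x : C, (g x - s) = g 1 - s :=
    Fintype.sum_eq_single 1 fun x hx => by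
      rw [hg x x.2 (by simpa using hx), sub_self]
  calc ∑ x : C, g x = ∑ x : C, (g x - s) + Fintype.card C * s := by
        simp [sum_sub_distrib]
    _ = g 1 + (Nat.card C - 1) * s := by
        rw [hsingle, Nat.card_eq_fintype_card]
        ring

namespace Pairing

variable {G H R : Type*} [Group G] [Fintype H] [CommRing R]

noncomputable def blockSum (f : G → H → R) (B : Set H) (x : G) : R :=
  ∑ b, if b ∈ B then f x b else 0

def annihilator (f : G → H → R) (C : Subgroup G) : Set H :=
  {b | ∀ a ∈ C, f a b = 1}

variable [Fintype G] [IsDomain R] (f : G → H → R)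

theorem card_mul_card_annihilator_inter (hf : ∀ a c b, f (a * c) b = f a b * f c b)
    (C : Subgroup G) (B : Set H) :
    (Nat.card C : R) * Nat.card (annihilator f C ∩ B : Set H) = ∑ x : C, blockSum f B x := by
  have hchar : ∀ b, ∑ x : C, f x b = if b ∈ annihilator f C then (Nat.card C : R) else 0 := by
    intro b
    rw [Fintype.sum_eq_ite_of_map_mul (fun x : C => f x b) fun x y => hf x y b,
      Nat.card_eq_fintype_card]
    exact if_congr (by simp [annihilator]) rfl rfl
  calc (Nat.card C : R) * Nat.card (annihilator f C ∩ B : Set H)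
      = ∑ b, if b ∈ annihilator f C ∩ B then (Nat.card C : R) else 0 := by
        rw [sum_ite, sum_const_zero, add_zero, sum_const, nsmul_eq_mul, mul_comm,
          Nat.card_eq_card_toFinset]
        congr
        ext
        simp
    _ = ∑ b, if b ∈ B then ∑ x : C, f x b else 0 := by
        refine sum_congr rfl fun b _ => ?_
        rw [hchar, ← ite_and]
        exact if_congr and_comm rfl rfl
    _ = ∑ x : C, blockSum f B x := by
        simp only [blockSum]
        rw [sum_comm]
        refine sum_congr rfl fun b _ => ?_
        split_ifs <;> simp

theorem blockSum_eq_of_card_annihilator_inter_eq [CharZero R]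
    (hf : ∀ a c b, f (a * c) b = f a b * f c b) (B : Set H) {C M : Subgroup G}
    (hCM : Nat.card C = Nat.card M) (hC : C ≠ ⊥) {a c : G}
    (ha : ∀ x ∈ C, x ≠ 1 → blockSum f B x = blockSum f B a)
    (hc : ∀ x ∈ M, x ≠ 1 → blockSum f B x = blockSum f B c)
    (hdual : Nat.card (annihilator f C ∩ B : Set H) = Nat.card (annihilator f M ∩ B : Set H)) :
    blockSum f B a = blockSum f B c := by
  have hC1 : (Nat.card C : R) - 1 ≠ 0 := by
    rw [sub_ne_zero, Ne, Nat.cast_eq_one]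
    exact (C.one_lt_card_iff_ne_bot.mpr hC).ne'
  have eC := (card_mul_card_annihilator_inter f hf C B).trans
    (C.sum_eq_add_of_forall_ne_one _ _ ha)
  have eM := (card_mul_card_annihilator_inter f hf M B).trans
    (M.sum_eq_add_of_forall_ne_one _ _ hc)
  rw [hdual, hCM] at eC
  refine mul_left_cancel₀ hC1 ?_
  rw [hCM]
  exact add_left_cancel (eC.symm.trans eM)

end Pairing

theorem Subgroup.natCard_inter_block {G : Type*} [Group G] {Λ : Set (Set G)}
    (hΛ : Λ.PairwiseDisjoint id) (hΛ1 : ({1} : Set G) ∈ Λ) {W : Set G} (hW : W ∈ Λ)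
    (hW1 : (1 : G) ∉ W) (C : Subgroup G) (hCW : (C : Set G) \ {1} ⊆ W) {V : Set G}
    (hV : V ∈ Λ) :
    Nat.card ((C : Set G) ∩ V : Set G)
      = if V = W then Nat.card C - 1 else if V = {1} then 1 else 0 := by
  split_ifs with hVW hV1
  · subst hVW
    have hCV : (C : Set G) ∩ V = (C : Set G) \ {1} := by
      ext x
      constructor
      · rintro ⟨hxC, hxV⟩
        exact ⟨hxC, fun hx1 => hW1 (hx1 ▸ hxV)⟩
      · exact fun hx => ⟨hx.1, hCW hx⟩
    rw [hCV, Nat.card_coe_set_eq, Set.ncard_sdiff_singleton_of_mem C.one_mem]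
    rfl
  · subst hV1
    simp [Set.inter_eq_right.mpr (Set.singleton_subset_iff.mpr C.one_mem)]
  · have hCV : (C : Set G) ∩ V = ∅ := Set.eq_empty_of_forall_notMem fun x ⟨hxC, hxV⟩ => by
      by_cases hx1 : x = 1
      · exact hV1 (hΛ.elim_set hV hΛ1 x hxV hx1)
      · exact hVW (hΛ.elim_set hV hW x hxV (hCW ⟨hxC, hx1⟩))
    simp [hCV]

theorem stmt12_general {G H : Type*} [CommGroup G] [Fintype G] [Fintype H]
    (f : G → H → ℂ)
    (hf1 : ∀ a c b, f (a * c) b = f a b * f c b)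
    -- S: a collection of non-identity subgroups of G of equal cardinality
    (S : Set (Subgroup G))
    (hSbot : ∀ C ∈ S, C ≠ ⊥)
    (hScard : ∀ C ∈ S, ∀ M ∈ S, Nat.card C = Nat.card M)
    -- Δ: a partition of G containing {1}, whose other blocks each contain C − {1} for some C ∈ S
    (Δ : Set (Set G))
    (hΔcover : ∀ a : G, ∃ A ∈ Δ, a ∈ A)
    (hΔS : ∀ A ∈ Δ, A ≠ ({1} : Set G) → ∃ C ∈ S, (C : Set G) \ {1} ⊆ A)
    -- Γ: a partition of H such that Δ is finer than l(Γ)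
    (Γ : Set (Set H))
    (hΔΓ : ∀ A ∈ Δ, ∀ a ∈ A, ∀ c ∈ A, ∀ B ∈ Γ,
        (∑ b : H, if b ∈ B then f a b else 0) = ∑ b : H, if b ∈ B then f c b else 0)
    -- Λ: a partition of G containing {1} such that Δ is finer than Λ
    (Λ : Set (Set G))
    (hΛdisj : ∀ A ∈ Λ, ∀ A' ∈ Λ, A ≠ A' → A ∩ A' = ∅)
    (hΛ1 : ({1} : Set G) ∈ Λ)
    (hΔΛ : ∀ A ∈ Δ, ∃ W ∈ Λ, A ⊆ W)
    -- hypothesis: equal Λ-distributions of members of S give equal Γ-distributions of their duals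
    (hMac : ∀ C ∈ S, ∀ M ∈ S,
        (∀ A ∈ Λ, Nat.card ((C : Set G) ∩ A : Set G) = Nat.card ((M : Set G) ∩ A : Set G)) →
        (∀ B ∈ Γ,
          Nat.card ({b : H | ∀ a ∈ C, f a b = 1} ∩ B : Set H)
            = Nat.card ({b : H | ∀ a ∈ M, f a b = 1} ∩ B : Set H))) :
    -- conclusion: Λ is finer than l(Γ)
    ∀ W ∈ Λ, ∀ a ∈ W, ∀ c ∈ W, ∀ B ∈ Γ,
      (∑ b : H, if b ∈ B then f a b else 0) = ∑ b : H, if b ∈ B then f c b else 0 := by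
  intro W hW a ha c hc B hB
  have hΛ : Λ.PairwiseDisjoint id := fun A hA A' hA' hne =>
    Set.disjoint_iff_inter_eq_empty.mpr (hΛdisj A hA A' hA' hne)
  by_cases hW1 : (1 : G) ∈ W
  · obtain rfl : W = {1} := hΛ.elim_set hW hΛ1 1 hW1 rfl
    rw [Set.mem_singleton_iff.mp ha, Set.mem_singleton_iff.mp hc]
  have hsubgroup : ∀ x ∈ W, ∃ C ∈ S, (C : Set G) \ {1} ⊆ W ∧
      ∀ y ∈ C, y ≠ 1 → Pairing.blockSum f B y = Pairing.blockSum f B x := by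
    intro x hx
    obtain ⟨A, hA, hxA⟩ := hΔcover x
    obtain ⟨C, hCS, hCA⟩ := hΔS A hA (by rintro rfl; exact hW1 (hxA ▸ hx))
    obtain ⟨W', hW', hAW'⟩ := hΔΛ A hA
    obtain rfl : W' = W := hΛ.elim_set hW' hW x (hAW' hxA) hx
    exact ⟨C, hCS, hCA.trans hAW', fun y hy hy1 => hΔΓ A hA y (hCA ⟨hy, hy1⟩) x hxA B hB⟩
  obtain ⟨C, hCS, hCW, hCa⟩ := hsubgroup a ha
  obtain ⟨M, hMS, hMW, hMc⟩ := hsubgroup c hc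
  have hdist (V : Set G) (hV : V ∈ Λ) :
      Nat.card ((C : Set G) ∩ V : Set G) = Nat.card ((M : Set G) ∩ V : Set G) := by
    rw [C.natCard_inter_block hΛ hΛ1 hW hW1 hCW hV,
      M.natCard_inter_block hΛ hΛ1 hW hW1 hMW hV, hScard C hCS M hMS]
  exact Pairing.blockSum_eq_of_card_annihilator_inter_eq f hf1 B (hScard C hCS M hMS) (hSbot C hCS)
    hCa hMc (hMac C hCS M hMS hdist B hB)

theorem stmt12 {G H : Type*} [CommGroup G] [CommGroup H] [Fintype G] [Fintype H]
    (f : G → H → ℂ)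
    (hf1 : ∀ a c b, f (a * c) b = f a b * f c b)
    (hf2 : ∀ a b d, f a (b * d) = f a b * f a d)
    (hnd1 : ∀ a : G, (∀ b : H, f a b = 1) → a = 1)
    (hnd2 : ∀ b : H, (∀ a : G, f a b = 1) → b = 1)
    -- S: a collection of non-identity subgroups of G of equal cardinality
    (S : Set (Subgroup G))
    (hSbot : ∀ C ∈ S, C ≠ ⊥)
    (hScard : ∀ C ∈ S, ∀ M ∈ S, Nat.card C = Nat.card M)
    -- Δ: a partition of G containing {1}, whose other blocks each contain C − {1} for some C ∈ S
    (Δ : Set (Set G))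
    (hΔne : ∀ A ∈ Δ, A.Nonempty) (hΔcover : ∀ a : G, ∃ A ∈ Δ, a ∈ A)
    (hΔdisj : ∀ A ∈ Δ, ∀ A' ∈ Δ, A ≠ A' → A ∩ A' = ∅)
    (hΔ1 : ({1} : Set G) ∈ Δ)
    (hΔS : ∀ A ∈ Δ, A ≠ ({1} : Set G) → ∃ C ∈ S, (C : Set G) \ {1} ⊆ A)
    -- Γ: a partition of H such that Δ is finer than l(Γ)
    (Γ : Set (Set H))
    (hΓne : ∀ B ∈ Γ, B.Nonempty) (hΓcover : ∀ b : H, ∃ B ∈ Γ, b ∈ B)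
    (hΓdisj : ∀ B ∈ Γ, ∀ B' ∈ Γ, B ≠ B' → B ∩ B' = ∅)
    (hΔΓ : ∀ A ∈ Δ, ∀ a ∈ A, ∀ c ∈ A, ∀ B ∈ Γ,
        (∑ b : H, if b ∈ B then f a b else 0) = ∑ b : H, if b ∈ B then f c b else 0)
    -- Λ: a partition of G containing {1} such that Δ is finer than Λ
    (Λ : Set (Set G))
    (hΛne : ∀ A ∈ Λ, A.Nonempty) (hΛcover : ∀ a : G, ∃ A ∈ Λ, a ∈ A)
    (hΛdisj : ∀ A ∈ Λ, ∀ A' ∈ Λ, A ≠ A' → A ∩ A' = ∅)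
    (hΛ1 : ({1} : Set G) ∈ Λ)
    (hΔΛ : ∀ A ∈ Δ, ∃ W ∈ Λ, A ⊆ W)
    -- hypothesis: equal Λ-distributions of members of S give equal Γ-distributions of their duals
    (hMac : ∀ C ∈ S, ∀ M ∈ S,
        (∀ A ∈ Λ, Nat.card ((C : Set G) ∩ A : Set G) = Nat.card ((M : Set G) ∩ A : Set G)) →
        (∀ B ∈ Γ,
          Nat.card ({b : H | ∀ a ∈ C, f a b = 1} ∩ B : Set H)
            = Nat.card ({b : H | ∀ a ∈ M, f a b = 1} ∩ B : Set H))) :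
    -- conclusion: Λ is finer than l(Γ)
    ∀ W ∈ Λ, ∀ a ∈ W, ∀ c ∈ W, ∀ B ∈ Γ,
      (∑ b : H, if b ∈ B then f a b else 0) = ∑ b : H, if b ∈ B then f c b else 0 :=
  stmt12_general f hf1 S hSbot hScard Δ hΔcover hΔS Γ hΔΓ Λ hΛdisj hΛ1 hΔΛ hMac
end

section
/- Let F be a finite field and H = ∏_{i∈Ω} F^{k_i} with the standard bilinear form and the pairing f(α,β) = χ(⟨α,β⟩) for a non-trivial additive character χ. Let Γ be an F-invariant partition of H with {0} ∈ Γ satisfying the MacWilliams extension property. Then Γ equals the orbit partition of its group of linear isometries inv(Γ), i.e., Γ = orb(inv(Γ)). -/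
theorem stmt17 {F : Type*} [Field F] [Fintype F] {Ω : Type*} [Fintype Ω] [Nonempty Ω]
    (k : Ω → ℕ) (hk : ∀ i, 0 < k i)
    (Γ : Set (Set (∀ i : Ω, Fin (k i) → F)))
    -- Γ is a partition of H = ∏ i, F^{k i}
    (hne : ∀ B ∈ Γ, B.Nonempty)
    (hcover : ∀ β : ∀ i : Ω, Fin (k i) → F, ∃ B ∈ Γ, β ∈ B)
    (hdisj : ∀ B ∈ Γ, ∀ B' ∈ Γ, B ≠ B' → B ∩ B' = ∅)
    -- {0} is a block of Γ
    (hzero : ({0} : Set (∀ i : Ω, Fin (k i) → F)) ∈ Γ)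
    -- Γ is F-invariant
    (hFinv : ∀ B ∈ Γ, ∀ c : F, c ≠ 0 → (fun β : ∀ i : Ω, Fin (k i) → F => c • β) '' B = B)
    -- Γ satisfies the MacWilliams extension property
    (hMEP : ∀ C : Submodule F (∀ i : Ω, Fin (k i) → F),
        ∀ g : C →ₗ[F] (∀ i : Ω, Fin (k i) → F), Function.Injective g →
        (∀ α : C, ∃ B ∈ Γ, (α : ∀ i : Ω, Fin (k i) → F) ∈ B ∧ g α ∈ B) →
        ∃ φ : (∀ i : Ω, Fin (k i) → F) ≃ₗ[F] (∀ i : Ω, Fin (k i) → F),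
          (∀ β, ∃ B ∈ Γ, β ∈ B ∧ φ β ∈ B) ∧ ∀ α : C, φ α = g α) :
    -- conclusion: Γ equals the orbit partition of inv(Γ)
    ∀ x y : ∀ i : Ω, Fin (k i) → F,
      (∃ B ∈ Γ, x ∈ B ∧ y ∈ B) ↔
        ∃ φ : (∀ i : Ω, Fin (k i) → F) ≃ₗ[F] (∀ i : Ω, Fin (k i) → F),
          (∀ β, ∃ B ∈ Γ, β ∈ B ∧ φ β ∈ B) ∧ φ x = y := by
  classical
  -- block containing 0 is {0}
  have hzero_block : ∀ B ∈ Γ, (0 : ∀ i : Ω, Fin (k i) → F) ∈ B → B = {0} := by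
    intro B hB h0
    by_contra h
    have hmem : (0 : ∀ i : Ω, Fin (k i) → F) ∈ B ∩ {0} := ⟨h0, rfl⟩
    rw [hdisj B hB {0} hzero h] at hmem
    exact hmem
  intro x y
  constructor
  · rintro ⟨B, hB, hxB, hyB⟩
    by_cases hx : x = 0
    · subst hx
      have hB0 := hzero_block B hB hxB
      have hy : y = 0 := by rw [hB0] at hyB; simpa using hyB
      refine ⟨LinearEquiv.refl F _, fun β => ?_, by simp [hy]⟩
      obtain ⟨B', hB', hβ⟩ := hcover β
      exact ⟨B', hB', hβ, hβ⟩
    · have hy : y ≠ 0 := by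
        intro h0
        have hB0 := hzero_block B hB (h0 ▸ hyB)
        rw [hB0] at hxB
        exact hx hxB
      set e := LinearEquiv.coord F (∀ i : Ω, Fin (k i) → F) x hx with he
      let g : Submodule.span F {x} →ₗ[F] (∀ i : Ω, Fin (k i) → F) :=
        (LinearMap.toSpanSingleton F _ y).comp e.toLinearMap
      have hg : ∀ α : Submodule.span F {x}, g α = e α • y := fun α => rfl
      have hcoe : ∀ α : Submodule.span F {x}, (α : ∀ i : Ω, Fin (k i) → F) = e α • x :=
        fun α => (LinearEquiv.coord_apply_smul F _ x hx α).symm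
      have hginj : Function.Injective g := by
        intro a b hab
        rw [hg, hg] at hab
        have : e a = e b := by
          by_contra hne'
          have h1 : (e a - e b) • y = 0 := by rw [sub_smul, hab, sub_self]
          rcases smul_eq_zero.1 h1 with h | h
          · exact hne' (sub_eq_zero.1 h)
          · exact hy h
        exact e.injective this
      have hcond : ∀ α : Submodule.span F {x},
          ∃ B' ∈ Γ, (α : ∀ i : Ω, Fin (k i) → F) ∈ B' ∧ g α ∈ B' := by
        intro α
        by_cases hc : e α = 0
        · refine ⟨{0}, hzero, ?_, ?_⟩
          · rw [Set.mem_singleton_iff, hcoe α, hc, zero_smul]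
          · rw [Set.mem_singleton_iff, hg α, hc, zero_smul]
        · refine ⟨B, hB, ?_, ?_⟩
          · rw [hcoe α, ← hFinv B hB _ hc]
            exact ⟨x, hxB, rfl⟩
          · rw [hg α, ← hFinv B hB _ hc]
            exact ⟨y, hyB, rfl⟩
      obtain ⟨φ, hφ1, hφ2⟩ := hMEP (Submodule.span F {x}) g hginj hcond
      refine ⟨φ, hφ1, ?_⟩
      have hxC : x ∈ Submodule.span F ({x} : Set (∀ i : Ω, Fin (k i) → F)) :=
        Submodule.mem_span_singleton_self x
      have h2 := hφ2 ⟨x, hxC⟩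
      rw [h2, hg, he, LinearEquiv.coord_self, one_smul]
  · rintro ⟨φ, hφ, rfl⟩
    exact hφ x
end

section
/- Let F be a finite field, H = ∏_{i∈Ω} F^{k_i}, and let Γ, Λ be F-invariant partitions of H. Then the following are equivalent: (1) Λ is finer than the left dual partition l(Γ); (2) {0} ∈ Λ and for all linear codes C₁, C₂ ⊆ H with the same Λ-distribution, C₁^⊥ and C₂^⊥ have the same Γ-distribution; (3) {0} ∈ Λ and the same implication holds restricted to 1-dimensional linear codes C₁, C₂. -/
open scoped Classical

noncomputable section

/-- The standard inner product on `H = ∏ i, F^{k i}`. -/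
def ip {F : Type*} [Field F] {Ω : Type*} [Fintype Ω] {k : Ω → ℕ}
    (α β : ∀ i : Ω, Fin (k i) → F) : F :=
  ∑ i, ∑ t, α i t * β i t

/-- The dual code of a linear code `C ⊆ H`. -/
def dualCode {F : Type*} [Field F] {Ω : Type*} [Fintype Ω] {k : Ω → ℕ}
    (C : Submodule F (∀ i : Ω, Fin (k i) → F)) : Set (∀ i : Ω, Fin (k i) → F) :=
  {β | ∀ α ∈ C, ip α β = 0}

section Aux
set_option linter.unusedSectionVars false
variable {F : Type*} [Field F] [Fintype F] {Ω : Type*} [Fintype Ω] {k : Ω → ℕ}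

lemma ip_smul_left (c : F) (α β : ∀ i : Ω, Fin (k i) → F) :
    ip (c • α) β = c * ip α β := by
  unfold ip
  rw [Finset.mul_sum]
  refine Finset.sum_congr rfl fun i _ => ?_
  rw [Finset.mul_sum]
  refine Finset.sum_congr rfl fun t _ => ?_
  simp [mul_assoc]

lemma ip_comm (α β : ∀ i : Ω, Fin (k i) → F) : ip α β = ip β α := by
  unfold ip
  refine Finset.sum_congr rfl fun i _ => Finset.sum_congr rfl fun t _ => mul_comm _ _

lemma ip_smul_right (c : F) (α β : ∀ i : Ω, Fin (k i) → F) :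
    ip α (c • β) = c * ip α β := by
  rw [ip_comm, ip_smul_left, ip_comm]

lemma ip_add_left (α α' β : ∀ i : Ω, Fin (k i) → F) :
    ip (α + α') β = ip α β + ip α' β := by
  unfold ip
  rw [← Finset.sum_add_distrib]
  refine Finset.sum_congr rfl fun i _ => ?_
  rw [← Finset.sum_add_distrib]
  refine Finset.sum_congr rfl fun t _ => ?_
  simp [add_mul]

lemma ip_zero_left (β : ∀ i : Ω, Fin (k i) → F) : ip 0 β = 0 := by
  unfold ip; simp

lemma exists_ip_ne_zero {α : ∀ i : Ω, Fin (k i) → F} (h : α ≠ 0) :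
    ∃ β : ∀ i : Ω, Fin (k i) → F, ip β α ≠ 0 := by
  have h2 : ∃ i t, α i t ≠ 0 := by
    by_contra hc; push_neg at hc
    exact h (funext fun i => funext fun t => hc i t)
  obtain ⟨i, t, hit⟩ := h2
  refine ⟨Pi.single i (Pi.single t 1), ?_⟩
  have : ip (Pi.single i (Pi.single t 1)) α = α i t := by
    unfold ip
    rw [Finset.sum_eq_single i]
    · rw [Finset.sum_eq_single t]
      · simp
      · intro t' _ ht'; simp [Pi.single_eq_of_ne ht']
      · simp
    · intro i' _ hi'; simp [Pi.single_eq_of_ne hi']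
    · simp
  rw [this]; exact hit

lemma card_eq_sum (s : Set (∀ i : Ω, Fin (k i) → F)) :
    ((Nat.card s : ℕ) : ℂ) = ∑ β : ∀ i : Ω, Fin (k i) → F, if β ∈ s then 1 else 0 := by
  rw [Nat.card_coe_set_eq, Set.ncard_eq_toFinset_card']
  rw [Finset.sum_boole]
  norm_num

end Aux

section Aux2
set_option linter.unusedSectionVars false
variable {F : Type*} [Field F] [Fintype F] {Ω : Type*} [Fintype Ω] {k : Ω → ℕ}

/-- Character sum over a submodule. -/
lemma sum_char_submodule (χ : AddChar F ℂ) (hχ : ∃ x : F, χ x ≠ 1)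
    (C : Submodule F (∀ i : Ω, Fin (k i) → F)) (β : ∀ i : Ω, Fin (k i) → F) :
    (∑ α : ∀ i : Ω, Fin (k i) → F, if α ∈ C then χ (ip α β) else 0)
      = if β ∈ dualCode C then ((Nat.card ((C : Set (∀ i : Ω, Fin (k i) → F))) : ℕ) : ℂ) else 0 := by
  by_cases hβ : β ∈ dualCode C
  · rw [if_pos hβ, card_eq_sum]
    refine Finset.sum_congr rfl fun α _ => ?_
    by_cases hα : α ∈ C
    · simp [hα, hβ α hα, SetLike.mem_coe]
    · simp [hα]
  · rw [if_neg hβ]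
    obtain ⟨α₀, hα₀C, hα₀⟩ : ∃ α₀ ∈ C, ip α₀ β ≠ 0 := by
      by_contra h; push_neg at h; exact hβ (fun a ha => h a ha)
    obtain ⟨x, hx⟩ := hχ
    set α₁ := (x / ip α₀ β) • α₀ with hα₁def
    have hα₁C : α₁ ∈ C := C.smul_mem _ hα₀C
    have hipx : ip α₁ β = x := by
      rw [hα₁def, ip_smul_left]; field_simp
    set s : ℂ := ∑ α : ∀ i : Ω, Fin (k i) → F, if α ∈ C then χ (ip α β) else 0 with hs
    have key : χ x * s = s := by
      rw [hs, Finset.mul_sum]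
      refine Fintype.sum_equiv (Equiv.addRight α₁) _ _ fun α => ?_
      have he : (Equiv.addRight α₁) α = α + α₁ := rfl
      by_cases hα : α ∈ C
      · rw [he, if_pos hα, if_pos (C.add_mem hα hα₁C), ip_add_left, hipx,
          AddChar.map_add_eq_mul]
        ring
      · rw [he, if_neg hα, if_neg ?_, mul_zero]
        intro hmem
        exact hα (by simpa using C.sub_mem hmem hα₁C)
    have : (χ x - 1) * s = 0 := by rw [sub_mul, one_mul, key, sub_self]
    rcases mul_eq_zero.mp this with h | h
    · exact absurd (sub_eq_zero.mp h) hx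
    · exact h

/-- Main counting identity. -/
lemma card_dual_inter (χ : AddChar F ℂ) (hχ : ∃ x : F, χ x ≠ 1)
    (C : Submodule F (∀ i : Ω, Fin (k i) → F)) (B : Set (∀ i : Ω, Fin (k i) → F)) :
    ((Nat.card (dualCode C ∩ B : Set (∀ i : Ω, Fin (k i) → F)) : ℕ) : ℂ)
        * ((Nat.card ((C : Set (∀ i : Ω, Fin (k i) → F))) : ℕ) : ℂ)
      = ∑ α : ∀ i : Ω, Fin (k i) → F, if α ∈ C then
          (∑ β : ∀ i : Ω, Fin (k i) → F, if β ∈ B then χ (ip α β) else 0) else 0 := by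
  have step1 : ∀ α : ∀ i : Ω, Fin (k i) → F,
      (if α ∈ C then (∑ β : ∀ i : Ω, Fin (k i) → F, if β ∈ B then χ (ip α β) else 0) else 0)
      = ∑ β : ∀ i : Ω, Fin (k i) → F, if β ∈ B then (if α ∈ C then χ (ip α β) else 0) else 0 := by
    intro α
    by_cases hα : α ∈ C
    · simp [hα]
    · simp [hα]
  rw [Finset.sum_congr rfl (fun α _ => step1 α), Finset.sum_comm]
  have step2 : ∀ β : ∀ i : Ω, Fin (k i) → F,
      (∑ α : ∀ i : Ω, Fin (k i) → F, if β ∈ B then (if α ∈ C then χ (ip α β) else 0) else 0)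
      = if β ∈ dualCode C ∩ B then ((Nat.card ((C : Set (∀ i : Ω, Fin (k i) → F))) : ℕ) : ℂ) else 0 := by
    intro β
    by_cases hβ : β ∈ B
    · simp only [hβ, if_true]
      rw [sum_char_submodule χ hχ]
      by_cases hd : β ∈ dualCode C
      · rw [if_pos hd, if_pos ⟨hd, hβ⟩]
      · rw [if_neg hd, if_neg (fun hm => hd hm.1)]
    · rw [if_neg (fun hm : β ∈ dualCode C ∩ B => hβ hm.2)]
      simp [hβ]
  rw [Finset.sum_congr rfl (fun β _ => step2 β)]
  rw [card_eq_sum, Finset.sum_mul]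
  refine Finset.sum_congr rfl fun β _ => ?_
  by_cases h : β ∈ dualCode C ∩ B
  · rw [if_pos h, if_pos h, one_mul]
  · rw [if_neg h, if_neg h, zero_mul]

end Aux2

section Aux3
set_option linter.unusedSectionVars false
variable {F : Type*} [Field F] [Fintype F] {Ω : Type*} [Fintype Ω] {k : Ω → ℕ}

lemma partition_sum {P : Set (Set (∀ i : Ω, Fin (k i) → F))}
    (hcover : ∀ v : ∀ i : Ω, Fin (k i) → F, ∃ A ∈ P, v ∈ A)
    (hdisj : ∀ A ∈ P, ∀ A' ∈ P, A ≠ A' → A ∩ A' = ∅)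
    (f : (∀ i : Ω, Fin (k i) → F) → ℂ) :
    ∑ A ∈ (Set.toFinite P).toFinset, ∑ v : ∀ i : Ω, Fin (k i) → F, (if v ∈ A then f v else 0)
      = ∑ v : ∀ i : Ω, Fin (k i) → F, f v := by
  rw [Finset.sum_comm]
  refine Finset.sum_congr rfl fun v _ => ?_
  obtain ⟨A₀, hA₀, hv⟩ := hcover v
  rw [Finset.sum_eq_single A₀]
  · rw [if_pos hv]
  · intro A hA hne
    rw [if_neg]
    intro hvA
    have hd := hdisj A ((Set.Finite.mem_toFinset _).mp hA) A₀ hA₀ hne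
    exact Set.eq_empty_iff_forall_notMem.mp hd v ⟨hvA, hv⟩
  · intro h; exact absurd ((Set.Finite.mem_toFinset _).mpr hA₀) h

lemma sum_all (χ : AddChar F ℂ) (hχ : ∃ x : F, χ x ≠ 1) (α : ∀ i : Ω, Fin (k i) → F) :
    ∑ β : ∀ i : Ω, Fin (k i) → F, χ (ip α β)
      = if α = 0 then ((Fintype.card (∀ i : Ω, Fin (k i) → F) : ℕ) : ℂ) else 0 := by
  have h1 : ∑ β : ∀ i : Ω, Fin (k i) → F, χ (ip α β)
      = ∑ β : ∀ i : Ω, Fin (k i) → F, if β ∈ (⊤ : Submodule F (∀ i : Ω, Fin (k i) → F))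
          then χ (ip β α) else 0 := by
    refine Finset.sum_congr rfl fun β _ => ?_
    rw [if_pos Submodule.mem_top, ip_comm]
  rw [h1, sum_char_submodule χ hχ]
  have h2 : α ∈ dualCode (⊤ : Submodule F (∀ i : Ω, Fin (k i) → F)) ↔ α = 0 := by
    constructor
    · intro h
      by_contra hα
      obtain ⟨β, hβ⟩ := exists_ip_ne_zero hα
      exact hβ (h β Submodule.mem_top)
    · intro h
      intro β _
      rw [h, ip_comm, ip_zero_left]
  have h3 : Nat.card ((⊤ : Submodule F (∀ i : Ω, Fin (k i) → F)) :
      Set (∀ i : Ω, Fin (k i) → F)) = Fintype.card (∀ i : Ω, Fin (k i) → F) := by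
    rw [Submodule.top_coe, Nat.card_univ, Nat.card_eq_fintype_card]
  by_cases h : α = 0
  · rw [if_pos (h2.mpr h), if_pos h, h3]
  · rw [if_neg (fun hm => h (h2.mp hm)), if_neg h]

lemma const_sum (f : (∀ i : Ω, Fin (k i) → F) → ℂ) (t : Set (∀ i : Ω, Fin (k i) → F)) (c : ℂ)
    (hf : ∀ v ∈ t, f v = c) :
    ∑ v : ∀ i : Ω, Fin (k i) → F, (if v ∈ t then f v else 0)
      = ((Nat.card t : ℕ) : ℂ) * c := by
  rw [card_eq_sum, Finset.sum_mul]
  refine Finset.sum_congr rfl fun v _ => ?_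
  by_cases h : v ∈ t
  · rw [if_pos h, if_pos h, one_mul, hf v h]
  · rw [if_neg h, if_neg h, zero_mul]

lemma dist_sum {Λ : Set (Set (∀ i : Ω, Fin (k i) → F))}
    (hΛne : ∀ A ∈ Λ, A.Nonempty)
    (hΛcover : ∀ v : ∀ i : Ω, Fin (k i) → F, ∃ A ∈ Λ, v ∈ A)
    (hΛdisj : ∀ A ∈ Λ, ∀ A' ∈ Λ, A ≠ A' → A ∩ A' = ∅)
    (f : (∀ i : Ω, Fin (k i) → F) → ℂ)
    (hf : ∀ A ∈ Λ, ∀ α ∈ A, ∀ γ ∈ A, f α = f γ)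
    (s₁ s₂ : Set (∀ i : Ω, Fin (k i) → F))
    (hcard : ∀ A ∈ Λ, Nat.card (s₁ ∩ A : Set (∀ i : Ω, Fin (k i) → F))
        = Nat.card (s₂ ∩ A : Set (∀ i : Ω, Fin (k i) → F))) :
    ∑ v : ∀ i : Ω, Fin (k i) → F, (if v ∈ s₁ then f v else 0)
      = ∑ v : ∀ i : Ω, Fin (k i) → F, (if v ∈ s₂ then f v else 0) := by
  have key : ∀ s : Set (∀ i : Ω, Fin (k i) → F),
      ∑ v : ∀ i : Ω, Fin (k i) → F, (if v ∈ s then f v else 0)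
      = ∑ A ∈ (Set.toFinite Λ).toFinset,
          ∑ v : ∀ i : Ω, Fin (k i) → F, (if v ∈ A then (if v ∈ s then f v else 0) else 0) := by
    intro s
    rw [partition_sum hΛcover hΛdisj]
  rw [key s₁, key s₂]
  refine Finset.sum_congr rfl fun A hA => ?_
  have hAΛ : A ∈ Λ := (Set.Finite.mem_toFinset _).mp hA
  obtain ⟨r, hr⟩ := hΛne A hAΛ
  have merge : ∀ s : Set (∀ i : Ω, Fin (k i) → F), ∀ v : ∀ i : Ω, Fin (k i) → F,
      (if v ∈ A then (if v ∈ s then f v else 0) else 0)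
        = @ite ℂ (v ∈ s ∩ A) (Classical.propDecidable _) (f v) 0 := by
    intro s v
    by_cases h1 : v ∈ A <;> by_cases h2 : v ∈ s <;>
      simp [h1, h2, Set.mem_inter_iff]
  rw [Finset.sum_congr rfl (fun v _ => merge s₁ v), Finset.sum_congr rfl (fun v _ => merge s₂ v)]
  refine (const_sum f (s₁ ∩ A) (f r) (fun v hv => hf A hAΛ v hv.2 r hr)).trans ?_
  rw [hcard A hAΛ]
  exact (const_sum f (s₂ ∩ A) (f r) (fun v hv => hf A hAΛ v hv.2 r hr)).symm

end Aux3

section Aux4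
set_option linter.unusedSectionVars false
variable {F : Type*} [Field F] [Fintype F] {Ω : Type*} [Fintype Ω] {k : Ω → ℕ}

/-- Condition (1) implies {0} ∈ Λ. -/
lemma zero_mem_of_finer (χ : AddChar F ℂ) (hχ : ∃ x : F, χ x ≠ 1)
    {Γ Λ : Set (Set (∀ i : Ω, Fin (k i) → F))}
    (hΓcover : ∀ β : ∀ i : Ω, Fin (k i) → F, ∃ B ∈ Γ, β ∈ B)
    (hΓdisj : ∀ B ∈ Γ, ∀ B' ∈ Γ, B ≠ B' → B ∩ B' = ∅)
    (hΛcover : ∀ α : ∀ i : Ω, Fin (k i) → F, ∃ A ∈ Λ, α ∈ A)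
    (h1 : ∀ A ∈ Λ, ∀ α ∈ A, ∀ γ ∈ A, ∀ B ∈ Γ,
        (∑ β : ∀ i : Ω, Fin (k i) → F, if β ∈ B then χ (ip α β) else 0)
          = ∑ β : ∀ i : Ω, Fin (k i) → F, if β ∈ B then χ (ip γ β) else 0) :
    ({0} : Set (∀ i : Ω, Fin (k i) → F)) ∈ Λ := by
  obtain ⟨A, hA, h0A⟩ := hΛcover 0
  have hsub : ∀ α ∈ A, α = 0 := by
    intro α hα
    by_contra hne
    have heq : ∀ B ∈ Γ,
        (∑ β : ∀ i : Ω, Fin (k i) → F, if β ∈ B then χ (ip α β) else 0)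
          = ∑ β : ∀ i : Ω, Fin (k i) → F, if β ∈ B then χ (ip 0 β) else 0 :=
      fun B hB => h1 A hA α hα 0 h0A B hB
    have htot : (∑ β : ∀ i : Ω, Fin (k i) → F, χ (ip α β))
        = ∑ β : ∀ i : Ω, Fin (k i) → F, χ (ip 0 β) := by
      rw [← partition_sum hΓcover hΓdisj (fun β => χ (ip α β)),
        ← partition_sum hΓcover hΓdisj (fun β => χ (ip 0 β))]
      exact Finset.sum_congr rfl fun B hB => heq B ((Set.Finite.mem_toFinset _).mp hB)
    rw [sum_all χ hχ, sum_all χ hχ, if_neg hne, if_pos rfl] at htot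
    have : (Fintype.card (∀ i : Ω, Fin (k i) → F) : ℂ) ≠ 0 := by
      exact_mod_cast Nat.cast_ne_zero.mpr Fintype.card_ne_zero
    exact this htot.symm
  have : A = ({0} : Set (∀ i : Ω, Fin (k i) → F)) := by
    ext x
    constructor
    · intro hx; exact hsub x hx
    · intro hx; rw [Set.mem_singleton_iff] at hx; rw [hx]; exact h0A
  rw [← this]; exact hA

lemma span_coe_eq (α : ∀ i : Ω, Fin (k i) → F) :
    ((Submodule.span F {α} : Submodule F (∀ i : Ω, Fin (k i) → F)) :
      Set (∀ i : Ω, Fin (k i) → F)) = (fun c : F => c • α) '' Set.univ := by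
  ext x
  simp only [SetLike.mem_coe, Submodule.mem_span_singleton, Set.image_univ, Set.mem_range]

lemma smul_inj_of_ne_zero {α : ∀ i : Ω, Fin (k i) → F} (hα : α ≠ 0) :
    Function.Injective (fun c : F => c • α) :=
  smul_left_injective F hα

lemma card_span (α : ∀ i : Ω, Fin (k i) → F) (hα : α ≠ 0) :
    Nat.card ((Submodule.span F {α} : Submodule F (∀ i : Ω, Fin (k i) → F)) :
      Set (∀ i : Ω, Fin (k i) → F)) = Fintype.card F := by
  rw [span_coe_eq, Nat.card_coe_set_eq,
    Set.ncard_image_of_injective _ (smul_inj_of_ne_zero hα), Set.ncard_univ,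
    Nat.card_eq_fintype_card]

/-- Sum over a 1-dim span reindexed through F. -/
lemma sum_span_reindex (α : ∀ i : Ω, Fin (k i) → F) (hα : α ≠ 0)
    (g : (∀ i : Ω, Fin (k i) → F) → ℂ) :
    (∑ v : ∀ i : Ω, Fin (k i) → F,
        if v ∈ (Submodule.span F {α} : Submodule F (∀ i : Ω, Fin (k i) → F)) then g v else 0)
      = ∑ c : F, g (c • α) := by
  rw [← Finset.sum_filter]
  rw [show Finset.univ.filter (fun v => v ∈ (Submodule.span F {α} :
        Submodule F (∀ i : Ω, Fin (k i) → F)))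
      = Finset.image (fun c : F => c • α) Finset.univ from ?_]
  · rw [Finset.sum_image (fun c _ c' _ h => smul_inj_of_ne_zero hα h)]
  · ext x
    simp [Submodule.mem_span_singleton]

/-- Scalar invariance of the block character sum. -/
lemma W_smul (χ : AddChar F ℂ) {B : Set (∀ i : Ω, Fin (k i) → F)}
    (hBinv : ∀ c : F, c ≠ 0 → (fun β : ∀ i : Ω, Fin (k i) → F => c • β) '' B = B)
    (α : ∀ i : Ω, Fin (k i) → F) (c : F) (hc : c ≠ 0) :
    (∑ β : ∀ i : Ω, Fin (k i) → F, if β ∈ B then χ (ip (c • α) β) else 0)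
      = ∑ β : ∀ i : Ω, Fin (k i) → F, if β ∈ B then χ (ip α β) else 0 := by
  have hmem : ∀ β : ∀ i : Ω, Fin (k i) → F, c • β ∈ B ↔ β ∈ B := by
    intro β
    constructor
    · intro h
      rw [← hBinv c hc] at h
      obtain ⟨b, hb, hbe⟩ := h
      have : b = β := smul_right_injective _ hc hbe
      rw [← this]; exact hb
    · intro h
      rw [← hBinv c hc]
      exact ⟨β, h, rfl⟩
  refine Fintype.sum_bijective (fun β => c • β) ?_ _ _ ?_
  · exact ⟨smul_right_injective _ hc,
      fun β => ⟨c⁻¹ • β, by simp [smul_smul, mul_inv_cancel₀ hc]⟩⟩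
  · intro β
    by_cases hβ : β ∈ B
    · rw [if_pos hβ, if_pos ((hmem β).mpr hβ), ip_smul_left, ip_smul_right]
    · rw [if_neg hβ, if_neg (fun h => hβ ((hmem β).mp h))]

end Aux4

section Aux5
set_option linter.unusedSectionVars false
variable {F : Type*} [Field F] [Fintype F] {Ω : Type*} [Fintype Ω] {k : Ω → ℕ}

lemma mem_smul_iff {A : Set (∀ i : Ω, Fin (k i) → F)} {c : F}
    (hinv : (fun β : ∀ i : Ω, Fin (k i) → F => c • β) '' A = A) (hc : c ≠ 0)
    (x : ∀ i : Ω, Fin (k i) → F) : c • x ∈ A ↔ x ∈ A := by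
  constructor
  · intro h
    rw [← hinv] at h
    obtain ⟨b, hb, hbe⟩ := h
    have : b = x := smul_right_injective _ hc hbe
    rw [← this]; exact hb
  · intro h
    rw [← hinv]
    exact ⟨x, h, rfl⟩

end Aux5

theorem stmt18 {F : Type*} [Field F] [Fintype F] {Ω : Type*} [Fintype Ω]
    (k : Ω → ℕ)
    (χ : AddChar F ℂ) (hχ : ∃ x : F, χ x ≠ 1)
    (Γ Λ : Set (Set (∀ i : Ω, Fin (k i) → F)))
    -- Γ and Λ are partitions of H
    (hΓne : ∀ B ∈ Γ, B.Nonempty)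
    (hΓcover : ∀ β : ∀ i : Ω, Fin (k i) → F, ∃ B ∈ Γ, β ∈ B)
    (hΓdisj : ∀ B ∈ Γ, ∀ B' ∈ Γ, B ≠ B' → B ∩ B' = ∅)
    (hΛne : ∀ A ∈ Λ, A.Nonempty)
    (hΛcover : ∀ α : ∀ i : Ω, Fin (k i) → F, ∃ A ∈ Λ, α ∈ A)
    (hΛdisj : ∀ A ∈ Λ, ∀ A' ∈ Λ, A ≠ A' → A ∩ A' = ∅)
    -- Γ and Λ are F-invariant
    (hΓinv : ∀ B ∈ Γ, ∀ c : F, c ≠ 0 →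
        (fun β : ∀ i : Ω, Fin (k i) → F => c • β) '' B = B)
    (hΛinv : ∀ A ∈ Λ, ∀ c : F, c ≠ 0 →
        (fun α : ∀ i : Ω, Fin (k i) → F => c • α) '' A = A) :
    -- (1) Λ is finer than l(Γ)
    ((∀ A ∈ Λ, ∀ α ∈ A, ∀ γ ∈ A, ∀ B ∈ Γ,
        (∑ β : ∀ i : Ω, Fin (k i) → F, if β ∈ B then χ (ip α β) else 0)
          = ∑ β : ∀ i : Ω, Fin (k i) → F, if β ∈ B then χ (ip γ β) else 0)
      ↔
      -- (2) {0} ∈ Λ, and (Λ, Γ) admits MacWilliams identity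
      (({0} : Set (∀ i : Ω, Fin (k i) → F)) ∈ Λ ∧
        ∀ C₁ C₂ : Submodule F (∀ i : Ω, Fin (k i) → F),
          (∀ A ∈ Λ, Nat.card ((C₁ : Set (∀ i : Ω, Fin (k i) → F)) ∩ A :
              Set (∀ i : Ω, Fin (k i) → F))
            = Nat.card ((C₂ : Set (∀ i : Ω, Fin (k i) → F)) ∩ A :
              Set (∀ i : Ω, Fin (k i) → F))) →
          ∀ B ∈ Γ, Nat.card (dualCode C₁ ∩ B : Set (∀ i : Ω, Fin (k i) → F))
            = Nat.card (dualCode C₂ ∩ B : Set (∀ i : Ω, Fin (k i) → F)))) ∧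
    -- (1) ↔ (3): the same restricted to 1-dimensional codes
    ((∀ A ∈ Λ, ∀ α ∈ A, ∀ γ ∈ A, ∀ B ∈ Γ,
        (∑ β : ∀ i : Ω, Fin (k i) → F, if β ∈ B then χ (ip α β) else 0)
          = ∑ β : ∀ i : Ω, Fin (k i) → F, if β ∈ B then χ (ip γ β) else 0)
      ↔
      (({0} : Set (∀ i : Ω, Fin (k i) → F)) ∈ Λ ∧
        ∀ C₁ C₂ : Submodule F (∀ i : Ω, Fin (k i) → F),
          Module.finrank F C₁ = 1 → Module.finrank F C₂ = 1 →
          (∀ A ∈ Λ, Nat.card ((C₁ : Set (∀ i : Ω, Fin (k i) → F)) ∩ A :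
              Set (∀ i : Ω, Fin (k i) → F))
            = Nat.card ((C₂ : Set (∀ i : Ω, Fin (k i) → F)) ∩ A :
              Set (∀ i : Ω, Fin (k i) → F))) →
          ∀ B ∈ Γ, Nat.card (dualCode C₁ ∩ B : Set (∀ i : Ω, Fin (k i) → F))
            = Nat.card (dualCode C₂ ∩ B : Set (∀ i : Ω, Fin (k i) → F)))) := by
  -- (1) → (2)
  have h12 : (∀ A ∈ Λ, ∀ α ∈ A, ∀ γ ∈ A, ∀ B ∈ Γ,
        (∑ β : ∀ i : Ω, Fin (k i) → F, if β ∈ B then χ (ip α β) else 0)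
          = ∑ β : ∀ i : Ω, Fin (k i) → F, if β ∈ B then χ (ip γ β) else 0) →
      (({0} : Set (∀ i : Ω, Fin (k i) → F)) ∈ Λ ∧
        ∀ C₁ C₂ : Submodule F (∀ i : Ω, Fin (k i) → F),
          (∀ A ∈ Λ, Nat.card ((C₁ : Set (∀ i : Ω, Fin (k i) → F)) ∩ A :
              Set (∀ i : Ω, Fin (k i) → F))
            = Nat.card ((C₂ : Set (∀ i : Ω, Fin (k i) → F)) ∩ A :
              Set (∀ i : Ω, Fin (k i) → F))) →
          ∀ B ∈ Γ, Nat.card (dualCode C₁ ∩ B : Set (∀ i : Ω, Fin (k i) → F))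
            = Nat.card (dualCode C₂ ∩ B : Set (∀ i : Ω, Fin (k i) → F))) := by
    intro h1
    refine ⟨zero_mem_of_finer χ hχ hΓcover hΓdisj hΛcover h1, ?_⟩
    intro C₁ C₂ hdist B hB
    have key₁ := card_dual_inter χ hχ C₁ B
    have key₂ := card_dual_inter χ hχ C₂ B
    have hsum : (∑ α : ∀ i : Ω, Fin (k i) → F, if α ∈ C₁ then
          (∑ β : ∀ i : Ω, Fin (k i) → F, if β ∈ B then χ (ip α β) else 0) else 0)
        = ∑ α : ∀ i : Ω, Fin (k i) → F, if α ∈ C₂ then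
          (∑ β : ∀ i : Ω, Fin (k i) → F, if β ∈ B then χ (ip α β) else 0) else 0 :=
      dist_sum hΛne hΛcover hΛdisj _
        (fun A hA α hα γ hγ => h1 A hA α hα γ hγ B hB) (C₁ : Set _) (C₂ : Set _) hdist
    have hq : ((Nat.card ((C₁ : Set (∀ i : Ω, Fin (k i) → F))) : ℕ) : ℂ)
        = ((Nat.card ((C₂ : Set (∀ i : Ω, Fin (k i) → F))) : ℕ) : ℂ) := by
      have h := dist_sum hΛne hΛcover hΛdisj (fun _ => (1 : ℂ))
        (fun _ _ _ _ _ _ => rfl) (C₁ : Set _) (C₂ : Set _) hdist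
      rw [← card_eq_sum, ← card_eq_sum] at h
      exact h
    have hqne : ((Nat.card ((C₁ : Set (∀ i : Ω, Fin (k i) → F))) : ℕ) : ℂ) ≠ 0 := by
      have hne : Nonempty ((C₁ : Set (∀ i : Ω, Fin (k i) → F))) := ⟨⟨0, C₁.zero_mem⟩⟩
      have hpos : 0 < Nat.card ((C₁ : Set (∀ i : Ω, Fin (k i) → F))) := Nat.card_pos
      exact Nat.cast_ne_zero.mpr hpos.ne'
    have hcc : ((Nat.card (dualCode C₁ ∩ B : Set (∀ i : Ω, Fin (k i) → F)) : ℕ) : ℂ)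
        = ((Nat.card (dualCode C₂ ∩ B : Set (∀ i : Ω, Fin (k i) → F)) : ℕ) : ℂ) := by
      have : ((Nat.card (dualCode C₁ ∩ B : Set (∀ i : Ω, Fin (k i) → F)) : ℕ) : ℂ)
            * ((Nat.card ((C₁ : Set (∀ i : Ω, Fin (k i) → F))) : ℕ) : ℂ)
          = ((Nat.card (dualCode C₂ ∩ B : Set (∀ i : Ω, Fin (k i) → F)) : ℕ) : ℂ)
            * ((Nat.card ((C₁ : Set (∀ i : Ω, Fin (k i) → F))) : ℕ) : ℂ) := by
        rw [key₁, hsum, ← key₂, hq]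
      exact mul_right_cancel₀ hqne this
    exact_mod_cast hcc
  -- (3) → (1)
  have h31 : (({0} : Set (∀ i : Ω, Fin (k i) → F)) ∈ Λ) →
      (∀ C₁ C₂ : Submodule F (∀ i : Ω, Fin (k i) → F),
          Module.finrank F C₁ = 1 → Module.finrank F C₂ = 1 →
          (∀ A ∈ Λ, Nat.card ((C₁ : Set (∀ i : Ω, Fin (k i) → F)) ∩ A :
              Set (∀ i : Ω, Fin (k i) → F))
            = Nat.card ((C₂ : Set (∀ i : Ω, Fin (k i) → F)) ∩ A :
              Set (∀ i : Ω, Fin (k i) → F))) →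
          ∀ B ∈ Γ, Nat.card (dualCode C₁ ∩ B : Set (∀ i : Ω, Fin (k i) → F))
            = Nat.card (dualCode C₂ ∩ B : Set (∀ i : Ω, Fin (k i) → F))) →
      (∀ A ∈ Λ, ∀ α ∈ A, ∀ γ ∈ A, ∀ B ∈ Γ,
        (∑ β : ∀ i : Ω, Fin (k i) → F, if β ∈ B then χ (ip α β) else 0)
          = ∑ β : ∀ i : Ω, Fin (k i) → F, if β ∈ B then χ (ip γ β) else 0) := by
    intro h0 hMW A hA α hα γ hγ B hB
    have hblock : ∀ x ∈ A, x = 0 → A = {0} := by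
      intro x hx hx0
      by_contra hne
      have hd := hΛdisj A hA {0} h0 hne
      have : (0 : ∀ i : Ω, Fin (k i) → F) ∈ A ∩ {0} := ⟨hx0 ▸ hx, rfl⟩
      rw [hd] at this
      exact Set.notMem_empty _ this
    by_cases hα0 : α = 0
    · have hA0 : A = {0} := hblock α hα hα0
      have hγ0 : γ = 0 := by rw [hA0] at hγ; exact hγ
      rw [hα0, hγ0]
    by_cases hγ0 : γ = 0
    · have hA0 : A = {0} := hblock γ hγ hγ0
      have : α = 0 := by rw [hA0] at hα; exact hα
      exact absurd this hα0
    -- main case : α ≠ 0, γ ≠ 0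
    set C₁ := Submodule.span F {α} with hC₁
    set C₂ := Submodule.span F {γ} with hC₂
    have hr₁ : Module.finrank F C₁ = 1 := finrank_span_singleton hα0
    have hr₂ : Module.finrank F C₂ = 1 := finrank_span_singleton hγ0
    have hABiff : ∀ A' ∈ Λ, (α ∈ A' ↔ γ ∈ A') := by
      intro A' hA'
      have hf : ∀ x ∈ A, x ∈ A' → A' = A := by
        intro x hx hx'
        by_contra hne
        have hd := hΛdisj A' hA' A hA hne
        have : x ∈ A' ∩ A := ⟨hx', hx⟩
        rw [hd] at this
        exact Set.notMem_empty _ this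
      exact ⟨fun h => (hf α hα h) ▸ hγ, fun h => (hf γ hγ h) ▸ hα⟩
    have hdist : ∀ A' ∈ Λ, Nat.card ((C₁ : Set (∀ i : Ω, Fin (k i) → F)) ∩ A' :
          Set (∀ i : Ω, Fin (k i) → F))
        = Nat.card ((C₂ : Set (∀ i : Ω, Fin (k i) → F)) ∩ A' :
          Set (∀ i : Ω, Fin (k i) → F)) := by
      intro A' hA'
      have hmemc : ∀ c : F, (c • α ∈ A' ↔ c • γ ∈ A') := by
        intro c
        by_cases hc : c = 0
        · rw [hc, zero_smul, zero_smul]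
        · rw [mem_smul_iff (hΛinv A' hA' c hc) hc, mem_smul_iff (hΛinv A' hA' c hc) hc]
          exact hABiff A' hA'
      have e₁ : ((C₁ : Set (∀ i : Ω, Fin (k i) → F)) ∩ A')
          = (fun c : F => c • α) '' {c : F | c • α ∈ A'} := by
        ext x
        constructor
        · rintro ⟨hx1, hx2⟩
          obtain ⟨c, hc⟩ := Submodule.mem_span_singleton.mp hx1
          exact ⟨c, by rw [Set.mem_setOf_eq, hc]; exact hx2, hc⟩
        · rintro ⟨c, hc, rfl⟩
          exact ⟨Submodule.mem_span_singleton.mpr ⟨c, rfl⟩, hc⟩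
      have e₂ : ((C₂ : Set (∀ i : Ω, Fin (k i) → F)) ∩ A')
          = (fun c : F => c • γ) '' {c : F | c • γ ∈ A'} := by
        ext x
        constructor
        · rintro ⟨hx1, hx2⟩
          obtain ⟨c, hc⟩ := Submodule.mem_span_singleton.mp hx1
          exact ⟨c, by rw [Set.mem_setOf_eq, hc]; exact hx2, hc⟩
        · rintro ⟨c, hc, rfl⟩
          exact ⟨Submodule.mem_span_singleton.mpr ⟨c, rfl⟩, hc⟩
      have hsets : {c : F | c • α ∈ A'} = {c : F | c • γ ∈ A'} :=
        Set.ext fun c => hmemc c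
      rw [e₁, e₂, Nat.card_coe_set_eq, Nat.card_coe_set_eq,
        Set.ncard_image_of_injective _ (smul_inj_of_ne_zero hα0),
        Set.ncard_image_of_injective _ (smul_inj_of_ne_zero hγ0), hsets]
    have hdual := hMW C₁ C₂ hr₁ hr₂ hdist B hB
    -- expand both counting identities
    have expand : ∀ δ : ∀ i : Ω, Fin (k i) → F, δ ≠ 0 →
        ((Nat.card (dualCode (Submodule.span F {δ}) ∩ B :
            Set (∀ i : Ω, Fin (k i) → F)) : ℕ) : ℂ) * ((Fintype.card F : ℕ) : ℂ)
        = (∑ β : ∀ i : Ω, Fin (k i) → F, if β ∈ B then χ (ip 0 β) else 0)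
          + ((Fintype.card F - 1 : ℕ) : ℂ)
            * (∑ β : ∀ i : Ω, Fin (k i) → F, if β ∈ B then χ (ip δ β) else 0) := by
      intro δ hδ
      have k1 := card_dual_inter χ hχ (Submodule.span F {δ}) B
      rw [card_span δ hδ] at k1
      rw [k1, sum_span_reindex δ hδ
        (fun v => ∑ β : ∀ i : Ω, Fin (k i) → F, if β ∈ B then χ (ip v β) else 0)]
      rw [← Finset.add_sum_erase _ _ (Finset.mem_univ (0 : F))]
      congr 1
      · rw [zero_smul]
      · rw [Finset.sum_congr rfl
          (fun c hc => W_smul χ (hΓinv B hB) δ c (Finset.ne_of_mem_erase hc))]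
        rw [Finset.sum_const, Finset.card_erase_of_mem (Finset.mem_univ _), Finset.card_univ]
        rw [nsmul_eq_mul]
    have eq₁ := expand α hα0
    have eq₂ := expand γ hγ0
    have hdC : ((Nat.card (dualCode (Submodule.span F {α}) ∩ B :
            Set (∀ i : Ω, Fin (k i) → F)) : ℕ) : ℂ)
        = ((Nat.card (dualCode (Submodule.span F {γ}) ∩ B :
            Set (∀ i : Ω, Fin (k i) → F)) : ℕ) : ℂ) := by
      exact_mod_cast hdual
    have hmain : ((Fintype.card F - 1 : ℕ) : ℂ)
          * (∑ β : ∀ i : Ω, Fin (k i) → F, if β ∈ B then χ (ip α β) else 0)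
        = ((Fintype.card F - 1 : ℕ) : ℂ)
          * (∑ β : ∀ i : Ω, Fin (k i) → F, if β ∈ B then χ (ip γ β) else 0) := by
      have h : ((Nat.card (dualCode (Submodule.span F {α}) ∩ B :
            Set (∀ i : Ω, Fin (k i) → F)) : ℕ) : ℂ) * ((Fintype.card F : ℕ) : ℂ)
          = ((Nat.card (dualCode (Submodule.span F {γ}) ∩ B :
            Set (∀ i : Ω, Fin (k i) → F)) : ℕ) : ℂ) * ((Fintype.card F : ℕ) : ℂ) := by
        rw [hdC]
      exact add_left_cancel (eq₁.symm.trans (h.trans eq₂))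
    have hm : ((Fintype.card F - 1 : ℕ) : ℂ) ≠ 0 := by
      have : 1 < Fintype.card F := Fintype.one_lt_card
      exact_mod_cast Nat.cast_ne_zero.mpr (Nat.sub_ne_zero_of_lt this)
    exact mul_left_cancel₀ hm hmain
  constructor
  · constructor
    · exact h12
    · rintro ⟨h0, hMW⟩
      exact h31 h0 (fun C₁ C₂ _ _ hd => hMW C₁ C₂ hd)
  · constructor
    · intro h1
      obtain ⟨h0, hMW⟩ := h12 h1
      exact ⟨h0, fun C₁ C₂ _ _ hd => hMW C₁ C₂ hd⟩
    · rintro ⟨h0, hMW⟩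
      exact h31 h0 hMW
end
end
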